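/- Let ψ be a fixed probability density on ℝ^d, and for a vector m ∈ ℝ^d and a positive-definite d×d matrix C define the location-scale density q_{m,C}(θ) = det(C)^{−1/2} ψ(C^{−1/2}(θ − m)). If ℓ : ℝ^d → ℝ is convex, then the map (m, C^{1/2}) ↦ E_{θ∼q_{m,C}}[ℓ(θ)] is convex. Moreover, if ℓ is H-strongly convex and ψ is the density of a centered random variable with identity covariance, then this map is H-strongly convex. -/

import Mathlib

/-!
For a fixed draw `u`, the point `m + S u` depends linearly on the parameter `p = (m, S)`, so
`p ↦ ℓ (m + S u)` is convex whenever `ℓ` is, and integrating over `u` preserves convexity.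
For strong convexity, `f` is `H`-strongly convex iff `f - H/2 ‖·‖²` is convex, and when `ψ` is
centered with identity covariance, `p ↦ m + S u` is an isometry in mean square:
`E ‖m + S u‖² = ‖m‖² + ‖S‖_F² = ‖p‖²`. Hence `E ℓ (m + S u) - H/2 ‖p‖²` is the expectation of
the convex functions `ℓ (m + S u) - H/2 ‖m + S u‖²`.
-/

open MeasureTheory

variable {d : ℕ}

/-- The expected loss of a location-scale family, `E_{u∼ψ}[ℓ(m + S u)]`,
viewed as a function of the parameter `(m, S)` (with `S = C^{1/2}`) packed
into a Euclidean space. -/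
noncomputable def locScaleLoss (ℓ : EuclideanSpace ℝ (Fin d) → ℝ)
    (ψ : Measure (EuclideanSpace ℝ (Fin d)))
    (p : EuclideanSpace ℝ (Fin d ⊕ Fin d × Fin d)) : ℝ :=
  ∫ u, ℓ (WithLp.toLp 2 (fun i => p (Sum.inl i) + ∑ j, p (Sum.inr (i, j)) * u j) :
    EuclideanSpace ℝ (Fin d)) ∂ψ

theorem convexOn_integral {E Ω : Type*} [AddCommGroup E] [Module ℝ E] [MeasurableSpace Ω]
    {μ : Measure Ω} {s : Set E} {f : E → Ω → ℝ} (hs : Convex ℝ s)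
    (hf : ∀ ω, ConvexOn ℝ s (f · ω)) (hint : ∀ x ∈ s, Integrable (f x) μ) :
    ConvexOn ℝ s fun x => ∫ ω, f x ω ∂μ := by
  refine ⟨hs, fun x hx y hy a b ha hb hab => ?_⟩
  calc ∫ ω, f (a • x + b • y) ω ∂μ
      ≤ ∫ ω, (a * f x ω + b * f y ω) ∂μ :=
        integral_mono (hint _ (hs hx hy ha hb hab))
          (((hint x hx).const_mul a).add ((hint y hy).const_mul b))
          fun ω => (hf ω).2 hx hy ha hb hab
    _ = a * ∫ ω, f x ω ∂μ + b * ∫ ω, f y ω ∂μ := by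
        rw [integral_add ((hint x hx).const_mul a) ((hint y hy).const_mul b),
          integral_const_mul, integral_const_mul]

theorem memLp_two_of_integral_mul_self_ne_zero {Ω : Type*} [MeasurableSpace Ω] {μ : Measure Ω}
    {f : Ω → ℝ} (hf : AEStronglyMeasurable f μ) (h : ∫ ω, f ω * f ω ∂μ ≠ 0) : MemLp f 2 μ :=
  (memLp_two_iff_integrable_sq hf).2 <| by simpa only [sq] using Integrable.of_integral_ne_zero h

section SecondMoments

variable {Ω ι : Type*} [MeasurableSpace Ω] {μ : Measure Ω} [Fintype ι] {X : ι → Ω → ℝ}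

theorem memLp_const_add_sum_mul [IsFiniteMeasure μ] (hX : ∀ i, MemLp (X i) 2 μ)
    (c : ℝ) (s : ι → ℝ) : MemLp (fun ω => c + ∑ j, s j * X j ω) 2 μ :=
  (memLp_const c).add (memLp_finsetSum _ fun j _ => (hX j).const_mul (s j))

theorem integral_const_add_sum_mul_sq [IsProbabilityMeasure μ] [DecidableEq ι]
    (hX : ∀ i, MemLp (X i) 2 μ)
    (hmean : ∀ i, ∫ ω, X i ω ∂μ = 0)
    (hcov : ∀ i j, ∫ ω, X i ω * X j ω ∂μ = if i = j then 1 else 0) (c : ℝ) (s : ι → ℝ) :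
    ∫ ω, (c + ∑ j, s j * X j ω) ^ 2 ∂μ = c ^ 2 + ∑ j, s j ^ 2 := by
  have hX1 (j : ι) : Integrable (fun ω => s j * X j ω) μ :=
    ((hX j).integrable one_le_two).const_mul _
  have hXX (j k : ι) : Integrable (fun ω => s j * s k * (X j ω * X k ω)) μ :=
    ((hX j).integrable_mul (hX k)).const_mul _
  have hlin : Integrable (fun ω => ∑ j, s j * X j ω) μ := integrable_finsetSum _ fun j _ => hX1 j
  have hquad : Integrable (fun ω => ∑ j, ∑ k, s j * s k * (X j ω * X k ω)) μ :=
    integrable_finsetSum _ fun j _ => integrable_finsetSum _ fun k _ => hXX j k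
  have hexpand (ω : Ω) : (c + ∑ j, s j * X j ω) ^ 2
      = c ^ 2 + 2 * c * ∑ j, s j * X j ω + ∑ j, ∑ k, s j * s k * (X j ω * X k ω) := by
    rw [add_sq, sq (∑ j, s j * X j ω), Finset.sum_mul_sum]
    congr 1
    exact Finset.sum_congr rfl fun j _ => Finset.sum_congr rfl fun k _ => by ring
  have haff : Integrable (fun ω => c ^ 2 + 2 * c * ∑ j, s j * X j ω) μ :=
    (integrable_const _).add (hlin.const_mul _)
  simp_rw [hexpand]
  rw [integral_add haff hquad, integral_add (integrable_const _) (hlin.const_mul _),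
    integral_const_mul,
    integral_finsetSum _ fun j _ => hX1 j,
    integral_finsetSum _ fun j _ => integrable_finsetSum _ fun k _ => hXX j k]
  simp_rw [integral_finsetSum _ fun k _ => hXX _ k, integral_const_mul, hmean, hcov]
  simp [sq]

end SecondMoments

noncomputable def locScaleMap (u : EuclideanSpace ℝ (Fin d)) :
    EuclideanSpace ℝ (Fin d ⊕ Fin d × Fin d) →ₗ[ℝ] EuclideanSpace ℝ (Fin d) where
  toFun p := WithLp.toLp 2 fun i => p (Sum.inl i) + ∑ j, p (Sum.inr (i, j)) * u j
  map_add' p q := by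
    ext i
    simp only [PiLp.add_apply, add_mul, Finset.sum_add_distrib]
    ring
  map_smul' a p := by
    ext i
    simp only [PiLp.smul_apply, smul_eq_mul, mul_add, Finset.mul_sum, mul_assoc, RingHom.id_apply]

theorem locScaleLoss_eq (ℓ : EuclideanSpace ℝ (Fin d) → ℝ)
    (ψ : Measure (EuclideanSpace ℝ (Fin d))) (p : EuclideanSpace ℝ (Fin d ⊕ Fin d × Fin d)) :
    locScaleLoss ℓ ψ p = ∫ u, ℓ (locScaleMap u p) ∂ψ := rfl

section Isotropic

variable {ψ : Measure (EuclideanSpace ℝ (Fin d))}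

theorem norm_locScaleMap_sq (u : EuclideanSpace ℝ (Fin d))
    (p : EuclideanSpace ℝ (Fin d ⊕ Fin d × Fin d)) :
    ‖locScaleMap u p‖ ^ 2 = ∑ i, (p (Sum.inl i) + ∑ j, p (Sum.inr (i, j)) * u j) ^ 2 :=
  EuclideanSpace.real_norm_sq_eq _

theorem memLp_two_apply_of_integral_mul_self (hcov : ∀ i j,
      ∫ u, (u : EuclideanSpace ℝ (Fin d)) i * u j ∂ψ = if i = j then 1 else 0) (i : Fin d) :
    MemLp (fun u : EuclideanSpace ℝ (Fin d) => u i) 2 ψ :=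
  memLp_two_of_integral_mul_self_ne_zero (by fun_prop) (by simp [hcov])

theorem integrable_norm_locScaleMap_sq [IsFiniteMeasure ψ] (hcov : ∀ i j,
      ∫ u, (u : EuclideanSpace ℝ (Fin d)) i * u j ∂ψ = if i = j then 1 else 0)
    (p : EuclideanSpace ℝ (Fin d ⊕ Fin d × Fin d)) :
    Integrable (fun u => ‖locScaleMap u p‖ ^ 2) ψ := by
  simp_rw [norm_locScaleMap_sq]
  exact integrable_finsetSum _ fun i _ => (memLp_const_add_sum_mul
    (memLp_two_apply_of_integral_mul_self hcov) _ _).integrable_sq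

theorem integral_norm_locScaleMap_sq [IsProbabilityMeasure ψ]
    (hmean : ∀ i, ∫ u, (u : EuclideanSpace ℝ (Fin d)) i ∂ψ = 0)
    (hcov : ∀ i j, ∫ u, (u : EuclideanSpace ℝ (Fin d)) i * u j ∂ψ = if i = j then 1 else 0)
    (p : EuclideanSpace ℝ (Fin d ⊕ Fin d × Fin d)) :
    ∫ u, ‖locScaleMap u p‖ ^ 2 ∂ψ = ‖p‖ ^ 2 := by
  have hX := memLp_two_apply_of_integral_mul_self hcov
  simp_rw [norm_locScaleMap_sq]
  rw [integral_finsetSum _ fun i _ => (memLp_const_add_sum_mul hX _ _).integrable_sq]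
  simp_rw [integral_const_add_sum_mul_sq hX hmean hcov]
  rw [EuclideanSpace.real_norm_sq_eq, Fintype.sum_sum_type, Fintype.sum_prod_type,
    Finset.sum_add_distrib]

end Isotropic

/-- Convexity of the expected loss of a location-scale family in `(m, C^{1/2})`:
if `ℓ` is convex the map is convex; if moreover `ℓ` is `H`-strongly convex and
`ψ` is the law of a centered random variable with identity covariance, the map
is `H`-strongly convex. -/
theorem locScale_expected_loss_convex
    (ℓ : EuclideanSpace ℝ (Fin d) → ℝ)
    (ψ : Measure (EuclideanSpace ℝ (Fin d))) [IsProbabilityMeasure ψ]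
    (hint : ∀ p : EuclideanSpace ℝ (Fin d ⊕ Fin d × Fin d),
      Integrable (fun u : EuclideanSpace ℝ (Fin d) =>
        ℓ (WithLp.toLp 2 (fun i => p (Sum.inl i) + ∑ j, p (Sum.inr (i, j)) * u j) :
          EuclideanSpace ℝ (Fin d))) ψ) :
    (ConvexOn ℝ Set.univ ℓ → ConvexOn ℝ Set.univ (locScaleLoss ℓ ψ)) ∧
    (∀ H : ℝ, 0 < H → StrongConvexOn Set.univ H ℓ →
      (∀ i, ∫ u, (u : EuclideanSpace ℝ (Fin d)) i ∂ψ = 0) →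
      (∀ i j, ∫ u, (u : EuclideanSpace ℝ (Fin d)) i * u j ∂ψ = if i = j then 1 else 0) →
      StrongConvexOn Set.univ H (locScaleLoss ℓ ψ)) := by
  have hint' (p : EuclideanSpace ℝ (Fin d ⊕ Fin d × Fin d)) :
      Integrable (fun u => ℓ (locScaleMap u p)) ψ := hint p
  refine ⟨fun hℓ => ?_, fun H _ hℓ hmean hcov => ?_⟩
  · exact convexOn_integral convex_univ (fun u => hℓ.comp_linearMap (locScaleMap u))
      fun p _ => hint' p
  · have hsq_int := integrable_norm_locScaleMap_sq hcov
    rw [strongConvexOn_iff_convex] at hℓ ⊢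
    have hsplit (p : EuclideanSpace ℝ (Fin d ⊕ Fin d × Fin d)) :
        locScaleLoss ℓ ψ p - H / 2 * ‖p‖ ^ 2
          = ∫ u, (ℓ (locScaleMap u p) - H / 2 * ‖locScaleMap u p‖ ^ 2) ∂ψ := by
      rw [integral_sub (hint' p) ((hsq_int p).const_mul _), integral_const_mul,
        integral_norm_locScaleMap_sq hmean hcov, locScaleLoss_eq]
    simp_rw [hsplit]
    exact convexOn_integral convex_univ (fun u => hℓ.comp_linearMap (locScaleMap u))
      fun p _ => (hint' p).sub ((hsq_int p).const_mul _)
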